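/- arXiv:2512.21047 — 4 statements merged into one kernel-verified Lean document; each statement's English description precedes it below -/
import Mathlib

section
/- For odd n, there is no assignment of values x_i, y_i ∈ {−1,+1} for i = 1,…,n (indices mod n) such that ∏_{i=1}^n x_i = +1 and for every i, x_1⋯x_{i−1}·y_i·y_{i+1}·x_{i+2}⋯x_n = −1 (GHZ paradox: the product of all n+1 assigned values must equal +1 from squaring, but equals −1 from the constraints). -/
open BigOperators

/-- GHZ paradox: for odd `n` there is no local-realistic assignment of values
`x i, y i ∈ {−1, +1}` (indices cyclic mod `n`) with `∏ i, x i = 1` and, for every `i`,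
`(∏_{j ∉ {i, i+1}} x j) * y i * y (i+1) = −1`. -/
theorem ghz_paradox (n : ℕ) [NeZero n] (hn : Odd n) :
    ¬ ∃ x y : Fin n → ℤ,
      (∀ i, x i = 1 ∨ x i = -1) ∧
      (∀ i, y i = 1 ∨ y i = -1) ∧
      (∏ i, x i) = 1 ∧
      (∀ i : Fin n, (∏ j ∈ Finset.univ \ {i, i + 1}, x j) * (y i * y (i + 1)) = -1) := by
  rintro ⟨x, y, hx, hy, hprod, hcon⟩
  rcases eq_or_lt_of_le (Nat.one_le_iff_ne_zero.mpr (NeZero.ne n)) with h1 | h2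
  · -- n = 1
    subst h1
    have := hcon 0
    have h0 : (0 : Fin 1) + 1 = 0 := Subsingleton.elim _ _
    rw [h0] at this
    have hs : (Finset.univ \ ({0, 0} : Finset (Fin 1))) = ∅ := by
      ext j
      simp [Subsingleton.elim j 0]
    rw [hs, Finset.prod_empty, one_mul] at this
    rcases hy 0 with h | h <;> rw [h] at this <;> norm_num at this
  · -- n ≥ 2
    have hne : ∀ i : Fin n, i ≠ i + 1 := by
      intro i h
      have : (0 : Fin n) = 1 := by
        have := congrArg (fun j => j - i) h
        simpa using this.symm
      have := congrArg Fin.val this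
      simp [Fin.val_one'] at this
      omega
    -- key: the complementary product equals x i * x (i+1)
    have hkey : ∀ i : Fin n, (∏ j ∈ Finset.univ \ {i, i + 1}, x j) = x i * x (i + 1) := by
      intro i
      have hsub : ({i, i + 1} : Finset (Fin n)) ⊆ Finset.univ := Finset.subset_univ _
      have hsd := Finset.prod_sdiff (f := x) hsub
      rw [hprod] at hsd
      have hpair : (∏ j ∈ ({i, i + 1} : Finset (Fin n)), x j) = x i * x (i + 1) := by
        rw [Finset.prod_pair (hne i)]
      rw [hpair] at hsd
      have hsq : (x i * x (i + 1)) * (x i * x (i + 1)) = 1 := by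
        rcases hx i with h | h <;> rcases hx (i + 1) with h' | h' <;> rw [h, h'] <;> norm_num
      calc (∏ j ∈ Finset.univ \ {i, i + 1}, x j)
          = (∏ j ∈ Finset.univ \ {i, i + 1}, x j) * ((x i * x (i + 1)) * (x i * x (i + 1))) := by
            rw [hsq, mul_one]
        _ = ((∏ j ∈ Finset.univ \ {i, i + 1}, x j) * (x i * x (i + 1))) * (x i * x (i + 1)) := by
            ring
        _ = x i * x (i + 1) := by rw [hsd, one_mul]
    set z : Fin n → ℤ := fun i => x i * y i with hz
    have hzcon : ∀ i : Fin n, z i * z (i + 1) = -1 := by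
      intro i
      have := hcon i
      rw [hkey i] at this
      simp only [hz]
      calc x i * y i * (x (i + 1) * y (i + 1))
          = x i * x (i + 1) * (y i * y (i + 1)) := by ring
        _ = -1 := this
    have hP : (∏ i, (z i * z (i + 1))) = -1 := by
      rw [Finset.prod_congr rfl (fun i _ => hzcon i)]
      simp [Odd.neg_one_pow hn]
    have hshift : (∏ i, z (i + 1)) = ∏ i, z i :=
      Equiv.prod_comp (Equiv.addRight (1 : Fin n)) z
    rw [Finset.prod_mul_distrib, hshift] at hP
    have : (0 : ℤ) ≤ (∏ i, z i) * (∏ i, z i) := mul_self_nonneg _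
    rw [hP] at this
    norm_num at this
end

section
/- For odd n ≥ 3 and any assignment x_i, y_i ∈ {−1,+1} (i = 1,…,n, indices cyclic mod n), the quantity v(O_0) − ∑_{i=1}^n v(O_i), where v(O_0) = ∏_{i=1}^n x_i and v(O_i) = (∏_{j∉{i,i+1}} x_j)·y_i·y_{i+1}, satisfies |v(O_0) − ∑_{i=1}^n v(O_i)| ≤ n − 1. -/
open BigOperators

/-- Deterministic local-realistic bound: for odd `n ≥ 3` and any `±1`-valued assignments
`x, y`, the Bell expression `v(O₀) − ∑ i, v(Oᵢ)` has absolute value at most `n − 1`,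
where `v(O₀) = ∏ i, x i` and `v(Oᵢ) = (∏_{j ∉ {i,i+1}} x j) * y i * y (i+1)`. -/
theorem lr_bound (n : ℕ) [NeZero n] (hn : Odd n) (h3 : 3 ≤ n) (x y : Fin n → ℤ)
    (hx : ∀ i, x i = 1 ∨ x i = -1) (hy : ∀ i, y i = 1 ∨ y i = -1) :
    |(∏ i, x i) -
        ∑ i : Fin n, (∏ j ∈ Finset.univ \ {i, i + 1}, x j) * (y i * y (i + 1))| ≤
      (n : ℤ) - 1 := by
  have hne : ∀ i : Fin n, i ≠ i + 1 := by
    intro i h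
    have h1 : (1 : Fin n) = 0 := (left_eq_add.mp h)
    have h2 : n = 1 := Fin.one_eq_zero_iff.mp h1
    omega
  set P : ℤ := ∏ i, x i with hP
  set w : Fin n → ℤ := fun i => x i * x (i + 1) * (y i * y (i + 1)) with hw
  -- each term rewrites as P * w i
  have hterm : ∀ i : Fin n, (∏ j ∈ Finset.univ \ {i, i + 1}, x j) * (y i * y (i + 1))
      = P * w i := by
    intro i
    have hpd := Finset.prod_sdiff (f := x) (Finset.subset_univ ({i, i+1} : Finset (Fin n)))
    rw [Finset.prod_pair (hne i)] at hpd
    have hxi : x i * x i = 1 := by rcases hx i with h|h <;> rw [h] <;> ring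
    have hxi1 : x (i+1) * x (i+1) = 1 := by rcases hx (i+1) with h|h <;> rw [h] <;> ring
    have key : P * (x i * x (i+1)) = ∏ j ∈ Finset.univ \ {i, i + 1}, x j := by
      rw [hP, ← hpd]
      linear_combination ((∏ j ∈ Finset.univ \ {i, i + 1}, x j) * (x (i+1) * x (i+1))) * hxi
        + (∏ j ∈ Finset.univ \ {i, i + 1}, x j) * hxi1
    simp only [hw]
    linear_combination (y i * y (i+1)) * key.symm
  rw [Finset.sum_congr rfl (fun i _ => hterm i), ← Finset.mul_sum]
  set S : ℤ := ∑ i, w i with hS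
  have habsP : |P| = 1 := by
    rw [hP, Finset.abs_prod]
    apply Finset.prod_eq_one
    intro i _
    rcases hx i with h|h <;> rw [h] <;> norm_num
  have hw1 : ∀ i, w i = 1 ∨ w i = -1 := by
    intro i
    rcases hx i with h1|h1 <;> rcases hx (i+1) with h2|h2 <;>
      rcases hy i with h3|h3 <;> rcases hy (i+1) with h4|h4 <;>
      simp [hw, h1, h2, h3, h4]
  -- product of w is 1
  have hshiftx : ∏ i : Fin n, x (i+1) = ∏ i, x i :=
    Fintype.prod_equiv (Equiv.addRight 1) _ _ (fun i => rfl)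
  have hshifty : ∏ i : Fin n, y (i+1) = ∏ i, y i :=
    Fintype.prod_equiv (Equiv.addRight 1) _ _ (fun i => rfl)
  have habsQ : |∏ i, y i| = 1 := by
    rw [Finset.abs_prod]
    apply Finset.prod_eq_one
    intro i _
    rcases hy i with h|h <;> rw [h] <;> norm_num
  have hprodw : ∏ i, w i = 1 := by
    have : ∏ i, w i = ((∏ i, x i) * ∏ i : Fin n, x (i+1)) *
        ((∏ i, y i) * ∏ i : Fin n, y (i+1)) := by
      simp only [hw, Finset.prod_mul_distrib]
    rw [this, hshiftx, hshifty]
    have h1 : (∏ i, x i) * (∏ i, x i) = 1 := by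
      have := abs_mul_abs_self (∏ i, x i)
      rw [habsP] at this; linarith
    have h2 : (∏ i, y i) * (∏ i, y i) = 1 := by
      have := abs_mul_abs_self (∏ i, y i)
      rw [habsQ] at this; linarith
    rw [h1, h2]; ring
  -- bounds on S
  have hSle : S ≤ (n : ℤ) := by
    have : S ≤ ∑ _i : Fin n, (1 : ℤ) :=
      Finset.sum_le_sum (fun i _ => by rcases hw1 i with h|h <;> simp [h])
    simpa using this
  have hSge : (2 : ℤ) - n ≤ S := by
    have hsum : ∑ i : Fin n, (w i + 1) = S + n := by
      rw [Finset.sum_add_distrib]; simp [hS]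
    have hdvd : 2 ∣ ∑ i : Fin n, (w i + 1) :=
      Finset.dvd_sum (fun i _ => by rcases hw1 i with h|h <;> simp [h])
    have hnonneg : (0 : ℤ) ≤ ∑ i : Fin n, (w i + 1) :=
      Finset.sum_nonneg (fun i _ => by rcases hw1 i with h|h <;> simp [h])
    have hne0 : ∑ i : Fin n, (w i + 1) ≠ 0 := by
      intro h0
      have hall := (Finset.sum_eq_zero_iff_of_nonneg
        (fun i _ => by rcases hw1 i with h|h <;> simp [h])).mp h0
      have hwall : ∀ i : Fin n, w i = -1 := by
        intro i
        have := hall i (Finset.mem_univ i)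
        linarith
      have : ∏ i : Fin n, w i = (-1) ^ n := by
        rw [Finset.prod_congr rfl (fun i _ => hwall i)]
        simp
      rw [hprodw, Odd.neg_one_pow hn] at this
      norm_num at this
    rw [hsum] at hdvd hnonneg hne0
    omega
  -- finish
  have : P - P * S = P * (1 - S) := by ring
  rw [this, abs_mul, habsP, one_mul, abs_le]
  constructor <;> linarith
end

section
/- For odd n, the maximal eigenvalue n+1 of the Bell operator O is non-degenerate, with unique (up to phase) eigenvector |ψ_n^+⟩ = (|0⟩^⊗n + |1⟩^⊗n)/√2; likewise the minimal eigenvalue −(n+1) is non-degenerate with eigenvector |ψ_n^−⟩. -/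
open Matrix BigOperators

noncomputable section

/-- Pauli X matrix. -/
def pauliX : Matrix (Fin 2) (Fin 2) ℂ := !![0, 1; 1, 0]

/-- Pauli Y matrix. -/
def pauliY : Matrix (Fin 2) (Fin 2) ℂ := !![0, -Complex.I; Complex.I, 0]

/-- Pauli Z matrix. -/
def pauliZ : Matrix (Fin 2) (Fin 2) ℂ := !![1, 0; 0, -1]

/-- Tensor product of `n` single-qubit operators, acting on `(ℂ²)^⊗n`
(realized as matrices indexed by bit strings `Fin n → Fin 2`). -/
def tensorOp {n : ℕ} (A : Fin n → Matrix (Fin 2) (Fin 2) ℂ) :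
    Matrix (Fin n → Fin 2) (Fin n → Fin 2) ℂ :=
  fun b c => ∏ i, A i (b i) (c i)

/-- `O₀ = X^⊗n`. -/
def bellO0 (n : ℕ) : Matrix (Fin n → Fin 2) (Fin n → Fin 2) ℂ :=
  tensorOp (fun _ => pauliX)

/-- `Oᵢ`: Pauli `Y` on qubits `i` and `i+1` (cyclically), Pauli `X` elsewhere. -/
def bellOi (n : ℕ) [NeZero n] (i : Fin n) :
    Matrix (Fin n → Fin 2) (Fin n → Fin 2) ℂ :=
  tensorOp (fun j => if j = i ∨ j = i + 1 then pauliY else pauliX)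

/-- The Bell operator `O = O₀ − ∑ i, Oᵢ`. -/
def bellOp (n : ℕ) [NeZero n] : Matrix (Fin n → Fin 2) (Fin n → Fin 2) ℂ :=
  bellO0 n - ∑ i : Fin n, bellOi n i

/-- The GHZ state `|ψₙ⁺⟩ = (|0…0⟩ + |1…1⟩)/√2` as a vector. -/
def ghzP (n : ℕ) : (Fin n → Fin 2) → ℂ := fun b =>
  if b = (fun _ => 0) then ((Real.sqrt 2)⁻¹ : ℂ)
  else if b = (fun _ => 1) then ((Real.sqrt 2)⁻¹ : ℂ) else 0

/-- The GHZ state `|ψₙ⁻⟩ = (|0…0⟩ − |1…1⟩)/√2` as a vector. -/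
def ghzM (n : ℕ) : (Fin n → Fin 2) → ℂ := fun b =>
  if b = (fun _ => 0) then ((Real.sqrt 2)⁻¹ : ℂ)
  else if b = (fun _ => 1) then -((Real.sqrt 2)⁻¹ : ℂ) else 0

/-- The projector `|ψₙ⁺⟩⟨ψₙ⁺|`. -/
def ghzProjP (n : ℕ) : Matrix (Fin n → Fin 2) (Fin n → Fin 2) ℂ :=
  vecMulVec (ghzP n) (fun b => (starRingEnd ℂ) (ghzP n b))

/-- The projector `|ψₙ⁻⟩⟨ψₙ⁻|`. -/
def ghzProjM (n : ℕ) : Matrix (Fin n → Fin 2) (Fin n → Fin 2) ℂ :=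
  vecMulVec (ghzM n) (fun b => (starRingEnd ℂ) (ghzM n b))

/-- Computational basis state `|b⟩`. -/
def basisState {n : ℕ} (b : Fin n → Fin 2) : (Fin n → Fin 2) → ℂ :=
  fun c => if c = b then 1 else 0

/-- Hadamard gate. -/
def hadamard : Matrix (Fin 2) (Fin 2) ℂ :=
  ((Real.sqrt 2)⁻¹ : ℂ) • !![1, 1; 1, -1]

def yval (x : Fin 2) : ℂ := if x = 0 then -Complex.I else Complex.I

lemma pauliX_apply (x y : Fin 2) : pauliX x y = if y = x + 1 then 1 else 0 := by
  fin_cases x <;> fin_cases y <;> simp [pauliX]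

lemma pauliY_apply (x y : Fin 2) : pauliY x y = if y = x + 1 then yval x else 0 := by
  fin_cases x <;> fin_cases y <;> simp [pauliY, yval]

lemma yval_mul (x y : Fin 2) : yval x * yval y = if x = y then (-1 : ℂ) else 1 := by
  fin_cases x <;> fin_cases y <;> simp [yval] <;> ring_nf <;> simp [Complex.I_sq]

lemma yval_succ (x : Fin 2) : yval (x + 1) = -yval x := by
  fin_cases x <;> simp [yval]

def flipv {n : ℕ} (b : Fin n → Fin 2) : Fin n → Fin 2 := fun i => b i + 1

lemma flipv_flipv {n} (b : Fin n → Fin 2) : flipv (flipv b) = b := by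
  have h : ∀ x : Fin 2, x + 1 + 1 = x := by decide
  funext i; simp [flipv, h]

lemma tensorOp_anti {n : ℕ} (A : Fin n → Matrix (Fin 2) (Fin 2) ℂ)
    (f : Fin n → Fin 2 → ℂ)
    (hA : ∀ j x y, A j x y = if y = x + 1 then f j x else 0)
    (b c : Fin n → Fin 2) :
    tensorOp A b c = if c = flipv b then ∏ j, f j (b j) else 0 := by
  unfold tensorOp
  by_cases h : c = flipv b
  · rw [if_pos h]
    refine Finset.prod_congr rfl fun j _ => ?_
    rw [hA, if_pos (by rw [h]; rfl)]
  · rw [if_neg h]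
    have : ∃ j, c j ≠ b j + 1 := by
      by_contra hc; push_neg at hc; exact h (funext hc)
    obtain ⟨j, hj⟩ := this
    exact Finset.prod_eq_zero (Finset.mem_univ j) (by rw [hA, if_neg hj])

def Wf (n : ℕ) [NeZero n] (i : Fin n) (b : Fin n → Fin 2) : ℂ :=
  ∏ j, (if j = i ∨ j = i + 1 then yval (b j) else 1)

lemma bellOp_apply (n : ℕ) [NeZero n] (b c : Fin n → Fin 2) :
    bellOp n b c = if c = flipv b then 1 - ∑ i : Fin n, Wf n i b else 0 := by
  have h0 : bellO0 n b c = if c = flipv b then 1 else 0 := by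
    rw [bellO0, tensorOp_anti _ (fun _ _ => 1) (fun j x y => pauliX_apply x y)]
    simp
  have hi : ∀ i : Fin n, bellOi n i b c = if c = flipv b then Wf n i b else 0 := by
    intro i
    rw [bellOi, tensorOp_anti _ (fun j x => if j = i ∨ j = i + 1 then yval x else 1)]
    · rfl
    · intro j x y
      by_cases hc : j = i ∨ j = i + 1
      · simp only [if_pos hc, pauliY_apply]
      · simp only [if_neg hc, pauliX_apply]
  have : bellOp n b c = bellO0 n b c - ∑ i : Fin n, bellOi n i b c := by
    simp [bellOp, Matrix.sub_apply, Matrix.sum_apply]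
  rw [this, h0]
  simp only [hi]
  split <;> simp

lemma bellOp_mulVec (n : ℕ) [NeZero n] (v : (Fin n → Fin 2) → ℂ) (b : Fin n → Fin 2) :
    (bellOp n).mulVec v b = (1 - ∑ i : Fin n, Wf n i b) * v (flipv b) := by
  unfold Matrix.mulVec dotProduct
  simp only [bellOp_apply, ite_mul, zero_mul]
  rw [Finset.sum_ite_eq' Finset.univ (flipv b) (fun c => (1 - ∑ i : Fin n, Wf n i b) * v c)]
  simp

lemma succ_ne {n : ℕ} [NeZero n] (hn : 2 ≤ n) (i : Fin n) : i ≠ i + 1 := by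
  intro h
  have := Fin.ext_iff.1 h
  simp [Fin.add_def] at this
  rcases Nat.lt_or_ge (i.val + 1) n with h1 | h1
  · rw [Nat.mod_eq_of_lt h1] at this; omega
  · have hi := i.isLt
    have : (i.val + 1) % n = 0 := by
      have : i.val + 1 = n := by omega
      simp [this]
    omega

lemma Wf_eq (n : ℕ) [NeZero n] (hn : 2 ≤ n) (i : Fin n) (b : Fin n → Fin 2) :
    Wf n i b = if b i = b (i + 1) then (-1 : ℂ) else 1 := by
  have hne := succ_ne hn i
  have hsub : ∏ j ∈ ({i, i+1} : Finset (Fin n)), (if j = i ∨ j = i + 1 then yval (b j) else 1)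
      = Wf n i b := by
    refine Finset.prod_subset (Finset.subset_univ _) ?_
    intro x _ hx
    simp only [Finset.mem_insert, Finset.mem_singleton] at hx
    push_neg at hx
    rw [if_neg (by tauto)]
  rw [← hsub, Finset.prod_pair hne]
  rw [if_pos (Or.inl rfl), if_pos (Or.inr rfl), yval_mul]

lemma Wf_flipv (n : ℕ) [NeZero n] (hn : 2 ≤ n) (i : Fin n) (b : Fin n → Fin 2) :
    Wf n i (flipv b) = Wf n i b := by
  rw [Wf_eq n hn, Wf_eq n hn]
  have : flipv b i = flipv b (i+1) ↔ b i = b (i+1) := by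
    constructor
    · intro h; have := congrArg (· + 1) h; simpa [flipv] using by
        have h2 : ∀ x : Fin 2, x + 1 + 1 = x := by decide
        have : b i + 1 = b (i+1) + 1 := h
        have := congrArg (· + 1) this
        simpa [h2] using this
    · intro h; simp [flipv, h]
  simp only [this]

lemma const_of_cyc {n : ℕ} [NeZero n] (b : Fin n → Fin 2) (h : ∀ i, b i = b (i + 1)) :
    ∀ j : Fin n, b j = b 0 := by
  have key : ∀ m : ℕ, ∀ hm : m < n, b ⟨m, hm⟩ = b 0 := by
    intro m
    induction m with
    | zero =>
      intro hm
      have : (⟨0, hm⟩ : Fin n) = 0 := Fin.ext (by simp)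
      rw [this]
    | succ k ih =>
      intro hm
      have hk : k < n := by omega
      have : (⟨k, hk⟩ : Fin n) + 1 = ⟨k + 1, hm⟩ := by
        apply Fin.ext
        simp [Fin.add_def, Nat.mod_eq_of_lt hm]
      rw [← this, ← h ⟨k, hk⟩, ih hk]
  intro j
  have := key j.val j.isLt
  simpa using this

lemma sum_W_cast (n : ℕ) [NeZero n] (hn : 2 ≤ n) (b : Fin n → Fin 2) :
    ∑ i : Fin n, Wf n i b
      = ((∑ i : Fin n, if b i = b (i + 1) then (-1 : ℤ) else 1 : ℤ) : ℂ) := by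
  push_cast [apply_ite (fun z : ℤ => (z : ℂ))]
  refine Finset.sum_congr rfl fun i _ => ?_
  rw [Wf_eq n hn]

lemma int_analysis (n : ℕ) (m : ℤ) (hub : m ≤ n) (heq : (1 - m)^2 = ((n : ℤ) + 1)^2) :
    m = -n := by
  have h2 : (1 - m - ((n : ℤ)+1)) * (1 - m + ((n : ℤ)+1)) = 0 := by linear_combination heq
  rcases mul_eq_zero.1 h2 with h | h <;> omega

lemma all_eq_of_sum (n : ℕ) [NeZero n] (b : Fin n → Fin 2)
    (h : (∑ i : Fin n, if b i = b (i + 1) then (-1 : ℤ) else 1) = -n) :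
    ∀ i : Fin n, b i = b (i + 1) := by
  by_contra hc
  push_neg at hc
  obtain ⟨i0, hi0⟩ := hc
  have hlb : ∀ i ∈ Finset.univ, (-1 : ℤ) ≤ (if b i = b (i + 1) then (-1 : ℤ) else 1) := by
    intro i _; split <;> omega
  have hle := Finset.sum_le_sum (s := Finset.univ.erase i0)
    (f := fun _ => (-1 : ℤ)) (g := fun i => if b i = b (i + 1) then (-1 : ℤ) else 1)
    (fun i _ => hlb i (Finset.mem_univ i))
  have hcard : (Finset.univ.erase i0).card = n - 1 := by
    rw [Finset.card_erase_of_mem (Finset.mem_univ _)]; simp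
  rw [Finset.sum_const, hcard] at hle
  rw [← Finset.add_sum_erase _ _ (Finset.mem_univ i0), if_neg hi0] at h
  have hn1 : 1 ≤ n := Nat.one_le_iff_ne_zero.2 (NeZero.ne n)
  have hcast : ((n - 1 : ℕ) : ℤ) = (n : ℤ) - 1 := by push_cast [hn1]; ring
  rw [nsmul_eq_mul, hcast] at hle
  omega

lemma eigen_pointwise (n : ℕ) [NeZero n] (lam : ℂ) (v : (Fin n → Fin 2) → ℂ)
    (hv : (bellOp n).mulVec v = lam • v) (c : Fin n → Fin 2) :
    (1 - ∑ i : Fin n, Wf n i c) * v (flipv c) = lam * v c := by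
  have := congrFun hv c
  rw [bellOp_mulVec] at this
  simpa using this

lemma support_lemma (n : ℕ) [NeZero n] (hn2 : 2 ≤ n) (lam : ℂ)
    (hlam : lam ^ 2 = ((n : ℂ) + 1) ^ 2) (v : (Fin n → Fin 2) → ℂ)
    (hv : (bellOp n).mulVec v = lam • v) (b : Fin n → Fin 2) (hb : v b ≠ 0) :
    (b = fun _ => 0) ∨ (b = fun _ => 1) := by
  have e1 := eigen_pointwise n lam v hv b
  have e2 := eigen_pointwise n lam v hv (flipv b)
  have hWf : ∑ i : Fin n, Wf n i (flipv b) = ∑ i : Fin n, Wf n i b :=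
    Finset.sum_congr rfl fun i _ => Wf_flipv n hn2 i b
  rw [flipv_flipv, hWf] at e2
  set t := 1 - ∑ i : Fin n, Wf n i b with ht
  have key : t ^ 2 * v b = lam ^ 2 * v b := by
    calc t ^ 2 * v b = t * (t * v b) := by ring
    _ = t * (lam * v (flipv b)) := by rw [e2]
    _ = lam * (t * v (flipv b)) := by ring
    _ = lam * (lam * v b) := by rw [e1]
    _ = lam ^ 2 * v b := by ring
  have ht2 : t ^ 2 = ((n : ℂ) + 1) ^ 2 := by
    have h0 : (t ^ 2 - lam ^ 2) * v b = 0 := by linear_combination key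
    rcases mul_eq_zero.1 h0 with h | h
    · rw [← hlam]; linear_combination h
    · exact absurd h hb
  set m : ℤ := ∑ i : Fin n, if b i = b (i + 1) then (-1 : ℤ) else 1 with hm
  have htm : t = 1 - (m : ℂ) := by
    rw [ht, sum_W_cast n hn2]
  have hZ : ((1 - m) ^ 2 : ℤ) = ((n : ℤ) + 1) ^ 2 := by
    have : (((1 - m) ^ 2 : ℤ) : ℂ) = ((((n : ℤ) + 1) ^ 2 : ℤ) : ℂ) := by
      push_cast
      rw [← htm]
      exact ht2
    exact_mod_cast this
  have hub : m ≤ n := by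
    rw [hm]
    calc (∑ i : Fin n, if b i = b (i + 1) then (-1 : ℤ) else 1)
        ≤ ∑ _i : Fin n, (1 : ℤ) := Finset.sum_le_sum (fun i _ => by split <;> omega)
    _ = n := by simp
  have hmn : m = -n := int_analysis n m hub hZ
  have hcyc : ∀ i : Fin n, b i = b (i + 1) := all_eq_of_sum n b hmn
  have hconst : b = fun _ => b 0 := funext (const_of_cyc b hcyc)
  by_cases h0 : b 0 = 0
  · left; rw [hconst, h0]
  · right
    have h1 : b 0 = 1 := by
      have := (b 0).isLt
      apply Fin.ext
      have := Fin.ext_iff.not.1 h0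
      omega
    rw [hconst, h1]

lemma Wf_one (c : Fin 1 → Fin 2) : ∑ i : Fin 1, Wf 1 i c = yval (c 0) := by
  rw [Fin.sum_univ_one, Wf, Fin.prod_univ_one, if_pos (Or.inl rfl)]

lemma yval_sq (x : Fin 2) : yval x ^ 2 = -1 := by
  fin_cases x <;> simp [yval] <;> ring_nf <;> simp [Complex.I_sq]

lemma n1_case (v : (Fin 1 → Fin 2) → ℂ) (lam : ℂ) (hlam : lam ^ 2 = 4)
    (hv : (bellOp 1).mulVec v = lam • v) : v = 0 := by
  funext c
  have e1 := eigen_pointwise 1 lam v hv c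
  have e2 := eigen_pointwise 1 lam v hv (flipv c)
  rw [flipv_flipv] at e2
  rw [Wf_one] at e1 e2
  have hfc : flipv c 0 = c 0 + 1 := rfl
  rw [hfc, yval_succ] at e2
  have key : (1 - yval (c 0) ^ 2) * v c = lam ^ 2 * v c := by
    calc (1 - yval (c 0) ^ 2) * v c
        = (1 - yval (c 0)) * ((1 - -yval (c 0)) * v c) := by ring
    _ = (1 - yval (c 0)) * (lam * v (flipv c)) := by rw [e2]
    _ = lam * ((1 - yval (c 0)) * v (flipv c)) := by ring
    _ = lam * (lam * v c) := by rw [e1]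
    _ = lam ^ 2 * v c := by ring
  rw [yval_sq, hlam] at key
  have h0 : v c = 0 := by linear_combination (-1/2) * key
  simpa using h0

lemma sum_W_const0 (n : ℕ) [NeZero n] (hn2 : 2 ≤ n) :
    ∑ i : Fin n, Wf n i (fun _ => (0 : Fin 2)) = -(n : ℂ) := by
  have : ∀ i : Fin n, Wf n i (fun _ => (0 : Fin 2)) = -1 := fun i => by
    rw [Wf_eq n hn2, if_pos rfl]
  simp [this]

lemma flipv_const0 (n : ℕ) : flipv (fun _ => (0 : Fin 2) : Fin n → Fin 2) = fun _ => 1 := by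
  funext i; rfl

lemma sqrt2C_ne : ((Real.sqrt 2 : ℝ) : ℂ) ≠ 0 := by
  simp only [ne_eq, Complex.ofReal_eq_zero]
  positivity

lemma sqrt2_mul_inv : ((Real.sqrt 2 : ℝ) : ℂ) * ((Real.sqrt 2 : ℝ) : ℂ)⁻¹ = 1 :=
  mul_inv_cancel₀ sqrt2C_ne

/-- The extremal eigenvalues `±(n+1)` of the Bell operator are non-degenerate:
any eigenvector is a scalar multiple of the corresponding GHZ state. -/
theorem bellOp_extremal_nondegenerate (n : ℕ) [NeZero n] (hn : Odd n) :
    (∀ v : (Fin n → Fin 2) → ℂ,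
        (bellOp n).mulVec v = ((n : ℂ) + 1) • v → ∃ c : ℂ, v = c • ghzP n) ∧
    (∀ v : (Fin n → Fin 2) → ℂ,
        (bellOp n).mulVec v = (-((n : ℂ) + 1)) • v → ∃ c : ℂ, v = c • ghzM n) := by
  have hcases : n = 1 ∨ 2 ≤ n := by
    have := NeZero.ne n; omega
  have hne : ((n : ℂ) + 1) ≠ 0 := by
    have h : ((n : ℕ) : ℂ) + 1 = ((n + 1 : ℕ) : ℂ) := by push_cast; ring
    rw [h]
    exact_mod_cast Nat.succ_ne_zero n
  constructor
  · intro v hv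
    rcases hcases with h1 | hn2
    · subst h1
      have hv0 : v = 0 := n1_case v _ (by norm_num) hv
      exact ⟨0, by rw [hv0, zero_smul]⟩
    · have hsupp := support_lemma n hn2 _ rfl v hv
      have e0 := eigen_pointwise n _ v hv (fun _ => 0)
      rw [sum_W_const0 n hn2, flipv_const0] at e0
      have hv1 : v (fun _ => 1) = v (fun _ => 0) := by
        refine mul_left_cancel₀ hne ?_
        linear_combination e0
      refine ⟨(Real.sqrt 2 : ℂ) * v (fun _ => 0), ?_⟩
      funext b
      simp only [Pi.smul_apply, smul_eq_mul, ghzP]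
      by_cases h0 : b = fun _ => 0
      · rw [if_pos h0, h0]
        push_cast
        linear_combination (-(v (fun _ => (0 : Fin 2)))) * sqrt2_mul_inv
      · rw [if_neg h0]
        by_cases h1 : b = fun _ => 1
        · rw [if_pos h1, h1, hv1]
          push_cast
          linear_combination (-(v (fun _ => (0 : Fin 2)))) * sqrt2_mul_inv
        · rw [if_neg h1, mul_zero]
          by_contra hb
          rcases hsupp b hb with h | h
          · exact h0 h
          · exact h1 h
  · intro v hv
    rcases hcases with h1 | hn2
    · subst h1
      have hv0 : v = 0 := n1_case v _ (by norm_num) hv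
      exact ⟨0, by rw [hv0, zero_smul]⟩
    · have hsupp := support_lemma n hn2 _ (by ring) v hv
      have e0 := eigen_pointwise n _ v hv (fun _ => 0)
      rw [sum_W_const0 n hn2, flipv_const0] at e0
      have hv1 : v (fun _ => 1) = -v (fun _ => 0) := by
        refine mul_left_cancel₀ hne ?_
        linear_combination e0
      refine ⟨(Real.sqrt 2 : ℂ) * v (fun _ => 0), ?_⟩
      funext b
      simp only [Pi.smul_apply, smul_eq_mul, ghzM]
      by_cases h0 : b = fun _ => 0
      · rw [if_pos h0, h0]
        push_cast
        linear_combination (-(v (fun _ => (0 : Fin 2)))) * sqrt2_mul_inv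
      · rw [if_neg h0]
        by_cases h1 : b = fun _ => 1
        · rw [if_pos h1, h1, hv1]
          push_cast
          linear_combination (v (fun _ => (0 : Fin 2))) * sqrt2_mul_inv
        · rw [if_neg h1, mul_zero]
          by_contra hb
          rcases hsupp b hb with h | h
          · exact h0 h
          · exact h1 h

end
end

section
/- Let |ψ⟩ be an n-qubit pure state with |⟨ψ_n^+|ψ⟩|² = 1 − δ. For any two indices i ≠ j, let |ψ_i⟩ = Z_i|ψ⟩ and |ψ_j⟩ = Z_j|ψ⟩ (Pauli Z applied to the i-th resp. j-th qubit). Then |⟨ψ_i|ψ_j⟩| ≥ 1 − 2δ. -/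
open Matrix BigOperators

noncomputable section

/-! `Zᵢ` and `Zⱼ` are diagonal in the computational basis, with entries `(-1)^{bᵢ}` and `(-1)^{bⱼ}`,
so `⟨Zᵢψ, Zⱼψ⟩ = ∑_b (-1)^{bᵢ+bⱼ} |ψ_b|²`, a real sum whose signs are `+1` on the GHZ support
`{0…0, 1…1}`. It is therefore at least `2(|ψ_{0…0}|² + |ψ_{1…1}|²) - 1`, while
`|⟨ψₙ⁺|ψ⟩|² = |ψ_{0…0} + ψ_{1…1}|²/2 ≤ |ψ_{0…0}|² + |ψ_{1…1}|²`, i.e. this mass is at least `1 - δ`. -/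

open ComplexConjugate

lemma tensorOp_diagonal {n : ℕ} (d : Fin n → Fin 2 → ℂ) :
    tensorOp (fun k => diagonal (d k)) = diagonal (fun b => ∏ k, d k (b k)) := by
  ext b c
  by_cases hbc : b = c
  · subst hbc
    simp [tensorOp]
  · obtain ⟨k, hk⟩ := Function.ne_iff.mp hbc
    rw [diagonal_apply_ne _ hbc]
    exact Finset.prod_eq_zero (Finset.mem_univ k) (diagonal_apply_ne _ hk)

lemma pauliZ_eq_diagonal : pauliZ = diagonal (fun x : Fin 2 => (-1 : ℂ) ^ (x : ℕ)) := by
  ext x y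
  fin_cases x <;> fin_cases y <;> simp [pauliZ]

lemma tensorOp_pauliZ_at {n : ℕ} (i : Fin n) :
    tensorOp (fun k => if k = i then pauliZ else 1) = diagonal (fun b => (-1) ^ (b i : ℕ)) := by
  have hdiag : (fun k => if k = i then pauliZ else 1) =
      fun k => diagonal (if k = i then fun x : Fin 2 => (-1 : ℂ) ^ (x : ℕ) else 1) := by
    ext1 k
    split_ifs
    · exact pauliZ_eq_diagonal
    · exact diagonal_one.symm
  rw [hdiag, tensorOp_diagonal]
  simp only [ite_apply, Pi.one_apply, Finset.prod_ite_eq', Finset.mem_univ, if_true]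

lemma sum_conj_neg_one_pow_mul {ι : Type*} [Fintype ι] (ψ : ι → ℂ) (k m : ι → ℕ) :
    ∑ b, conj ((-1) ^ k b * ψ b) * ((-1) ^ m b * ψ b) =
      ((∑ b, (-1 : ℝ) ^ (k b + m b) * Complex.normSq (ψ b) : ℝ) : ℂ) := by
  push_cast
  refine Finset.sum_congr rfl fun b _ => ?_
  rw [Complex.normSq_eq_conj_mul_self, pow_add]
  simp
  ring

lemma two_mul_sum_sub_sum_le_sum_mul {ι : Type*} [Fintype ι] {σ p : ι → ℝ}
    (hσ : ∀ b, -1 ≤ σ b) (hp : ∀ b, 0 ≤ p b) (S : Finset ι) (hS : ∀ b ∈ S, σ b = 1) :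
    2 * ∑ b ∈ S, p b - ∑ b, p b ≤ ∑ b, σ b * p b := by
  have hshift : ∑ b, (σ b + 1) * p b = ∑ b, σ b * p b + ∑ b, p b := by
    simp only [add_mul, one_mul, Finset.sum_add_distrib]
  have hsupport : 2 * ∑ b ∈ S, p b ≤ ∑ b, (σ b + 1) * p b :=
    calc 2 * ∑ b ∈ S, p b = ∑ b ∈ S, (σ b + 1) * p b := by
          rw [Finset.mul_sum]
          exact Finset.sum_congr rfl fun b hb => by rw [hS b hb]; ring
      _ ≤ ∑ b, (σ b + 1) * p b :=
          Finset.sum_le_univ_sum_of_nonneg fun b => mul_nonneg (by linarith [hσ b]) (hp b)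
  linarith

lemma const_zero_ne_const_one {n : ℕ} [NeZero n] : (fun _ => 0 : Fin n → Fin 2) ≠ fun _ => 1 :=
  Function.const_injective.ne zero_ne_one

lemma inner_ghzP {n : ℕ} [NeZero n] (ψ : (Fin n → Fin 2) → ℂ) :
    ∑ b, conj (ghzP n b) * ψ b = ((Real.sqrt 2)⁻¹ : ℂ) * (ψ (fun _ => 0) + ψ (fun _ => 1)) := by
  rw [Fintype.sum_eq_add _ _ const_zero_ne_const_one, mul_add]
  · simp [ghzP, const_zero_ne_const_one.symm, Complex.conj_ofReal]
  · rintro b ⟨hb0, hb1⟩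
    simp [ghzP, hb0, hb1]

lemma norm_inner_ghzP_sq_le {n : ℕ} [NeZero n] (ψ : (Fin n → Fin 2) → ℂ) :
    ‖∑ b, conj (ghzP n b) * ψ b‖ ^ 2 ≤
      Complex.normSq (ψ (fun _ => 0)) + Complex.normSq (ψ (fun _ => 1)) := by
  rw [inner_ghzP, norm_mul, mul_pow, ← Complex.sq_norm, ← Complex.sq_norm]
  have hsqrt : ‖((Real.sqrt 2)⁻¹ : ℂ)‖ ^ 2 = 1 / 2 := by simp
  rw [hsqrt]
  nlinarith [norm_add_le (ψ fun _ => 0) (ψ fun _ => 1), norm_nonneg (ψ (fun _ => 0) + ψ fun _ => 1),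
    sq_nonneg (‖ψ fun _ => 0‖ - ‖ψ fun _ => 1‖)]

theorem phase_flip_overlap_general (n : ℕ) (δ : ℝ) (ψ : (Fin n → Fin 2) → ℂ)
    (hψ : ∑ b, Complex.normSq (ψ b) = 1)
    (hfid : (‖∑ b, (starRingEnd ℂ) (ghzP n b) * ψ b‖) ^ 2 = 1 - δ)
    (i j : Fin n) :
    1 - 2 * δ ≤
      ‖∑ b,
        (starRingEnd ℂ) (((tensorOp (fun k => if k = i then pauliZ else 1)).mulVec ψ) b) *
          ((tensorOp (fun k => if k = j then pauliZ else 1)).mulVec ψ) b‖ := by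
  have : NeZero n := NeZero.of_pos i.pos
  have hghz := hfid ▸ norm_inner_ghzP_sq_le ψ
  have hsigned := two_mul_sum_sub_sum_le_sum_mul
    (σ := fun b => (-1 : ℝ) ^ ((b i : ℕ) + b j)) (p := fun b => Complex.normSq (ψ b))
    (fun b => by rcases neg_one_pow_eq_or ℝ ((b i : ℕ) + b j) with h | h <;> simp [h])
    (fun b => Complex.normSq_nonneg _) {fun _ => 0, fun _ => 1}
    (by simp)
  rw [Finset.sum_pair const_zero_ne_const_one, hψ] at hsigned
  simp only [tensorOp_pauliZ_at, mulVec_diagonal, sum_conj_neg_one_pow_mul, Complex.norm_real,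
    Real.norm_eq_abs]
  linarith [le_abs_self (∑ b, (-1 : ℝ) ^ ((b i : ℕ) + b j) * Complex.normSq (ψ b))]

/-- If `|⟨ψₙ⁺|ψ⟩|² = 1 − δ`, then for any `i ≠ j` the states `Zᵢ|ψ⟩` and `Zⱼ|ψ⟩`
have overlap at least `1 − 2δ`. -/
theorem phase_flip_overlap (n : ℕ) (δ : ℝ) (ψ : (Fin n → Fin 2) → ℂ)
    (hψ : ∑ b, Complex.normSq (ψ b) = 1)
    (hfid : (‖∑ b, (starRingEnd ℂ) (ghzP n b) * ψ b‖) ^ 2 = 1 - δ)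
    (i j : Fin n) (hij : i ≠ j) :
    1 - 2 * δ ≤
      ‖∑ b,
        (starRingEnd ℂ) (((tensorOp (fun k => if k = i then pauliZ else 1)).mulVec ψ) b) *
          ((tensorOp (fun k => if k = j then pauliZ else 1)).mulVec ψ) b‖ :=
  phase_flip_overlap_general n δ ψ hψ hfid i j

end
end
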